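/- Let ω > 0 and a < R be real numbers, let E be continuous on [a, R], and let φ be a C² function on [a, R] with φ(R) = 0 satisfying −φ''(x) + ω²·φ(x) = E(x) for all x ∈ [a, R]. Then for every x ∈ [a, R], |φ(x) − φ(a)·sinh(ω·(R − x))/sinh(ω·(R − a))| ≤ ω⁻²·sup_{y ∈ [a, R]} |E(y)|. -/

import Mathlib

/-!
Since `sinh (ω (R - x))` solves `-u'' + ω² u = 0`, the difference `ψ` between `φ` and the
homogeneous profile satisfies `-ψ'' + ω² ψ = E` with `ψ(a) = ψ(R) = 0`. The maximum principle
for `-d²/dx² + ω²`, applied to `±ψ - M/ω²`, gives `|ψ| ≤ M/ω²`.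
-/

open Set Filter Topology

/-- If `f''(c) > 0`, the second-derivative test makes `c` a local minimum as well, so `f` is
locally constant and `f''(c) = 0`. -/
theorem IsLocalMax.deriv_deriv_nonpos {f : ℝ → ℝ} {c : ℝ} (hmax : IsLocalMax f c)
    (hc : ContinuousAt f c) : deriv (deriv f) c ≤ 0 := by
  by_contra! hpos
  have hmin : IsLocalMin f c := isLocalMin_of_deriv_deriv_pos hpos hmax.deriv_eq_zero hc
  have hconst : f =ᶠ[𝓝 c] fun _ => f c := by
    filter_upwards [hmax, hmin] with x hle hge
    exact le_antisymm hle hge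
  have hderiv : deriv f =ᶠ[𝓝 c] fun _ => 0 :=
    hconst.eventuallyEq_nhds.mono fun x hx => hx.deriv_eq.trans (deriv_const x (f c))
  exact hpos.ne' (hderiv.deriv_eq.trans (deriv_const c 0))

theorem derivWithin_derivWithin_of_mem_nhds {𝕜 F : Type*} [NontriviallyNormedField 𝕜]
    [NormedAddCommGroup F] [NormedSpace 𝕜 F] {f : 𝕜 → F} {s : Set 𝕜} {x : 𝕜} (hs : s ∈ 𝓝 x) :
    derivWithin (derivWithin f s) s x = deriv (deriv f) x := by
  have hderiv : derivWithin f s =ᶠ[𝓝 x] deriv f :=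
    (eventually_mem_nhds_iff.mpr hs).mono fun y hy => derivWithin_of_mem_nhds hy
  rw [derivWithin_of_mem_nhds hs, hderiv.deriv_eq]

/-- At an interior positive maximum we would have `u'' ≥ k u > 0`. -/
theorem nonpos_of_mul_le_deriv_deriv {u : ℝ → ℝ} {a b k : ℝ} (hk : 0 < k)
    (hu : ContinuousOn u (Icc a b)) (hode : ∀ x ∈ Ioo a b, k * u x ≤ deriv (deriv u) x)
    (ha : u a ≤ 0) (hb : u b ≤ 0) : ∀ x ∈ Icc a b, u x ≤ 0 := by
  intro x hx
  obtain ⟨c, hc, hmax⟩ := isCompact_Icc.exists_isMaxOn ⟨x, hx⟩ hu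
  refine (hmax hx).trans ?_
  rcases hc.1.eq_or_lt with rfl | hac
  · exact ha
  rcases hc.2.eq_or_lt with rfl | hcb
  · exact hb
  have hnhds : Icc a b ∈ 𝓝 c := Icc_mem_nhds hac hcb
  have hneg := (hmax.isLocalMax hnhds).deriv_deriv_nonpos (hu.continuousAt hnhds)
  nlinarith [hode c ⟨hac, hcb⟩]

theorem le_div_of_mul_sub_deriv_deriv_le {u : ℝ → ℝ} {a b k M : ℝ} (hk : 0 < k)
    (hu : ContinuousOn u (Icc a b)) (hode : ∀ x ∈ Ioo a b, k * u x - deriv (deriv u) x ≤ M)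
    (ha : u a ≤ M / k) (hb : u b ≤ M / k) : ∀ x ∈ Icc a b, u x ≤ M / k := by
  have hkMk : k * (M / k) = M := mul_div_cancel₀ M hk.ne'
  have := nonpos_of_mul_le_deriv_deriv (u := fun x => u x - M / k) hk
    (hu.sub continuousOn_const)
    (fun x hx => by
      rw [deriv_sub_const_fun]
      linarith [hode x hx, mul_sub k (u x) (M / k)])
    (by linarith) (by linarith)
  exact fun x hx => sub_nonpos.mp (this x hx)

theorem abs_le_div_of_abs_mul_sub_deriv_deriv_le {u : ℝ → ℝ} {a b k M : ℝ} (hk : 0 < k)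
    (hM : 0 ≤ M) (hu : ContinuousOn u (Icc a b))
    (hode : ∀ x ∈ Ioo a b, |k * u x - deriv (deriv u) x| ≤ M)
    (ha : u a = 0) (hb : u b = 0) (x : ℝ) (hx : x ∈ Icc a b) : |u x| ≤ M / k := by
  have hMk : 0 ≤ M / k := div_nonneg hM hk.le
  refine abs_le.mpr ⟨?_, le_div_of_mul_sub_deriv_deriv_le hk hu
    (fun y hy => (abs_le.mp (hode y hy)).2) (ha ▸ hMk) (hb ▸ hMk) x hx⟩
  have := le_div_of_mul_sub_deriv_deriv_le (u := fun y => -u y) (M := M) hk hu.neg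
    (fun y hy => by rw [deriv.fun_neg', deriv.fun_neg]; linarith [(abs_le.mp (hode y hy)).1])
    (by simpa [ha]) (by simpa [hb]) x hx
  linarith

theorem deriv_deriv_sub {𝕜 F : Type*} [NontriviallyNormedField 𝕜] [NormedAddCommGroup F]
    [NormedSpace 𝕜 F] {f g : 𝕜 → F} {x : 𝕜} (hf : ContDiffAt 𝕜 2 f x) (hg : ContDiffAt 𝕜 2 g x) :
    deriv (deriv (f - g)) x = deriv (deriv f) x - deriv (deriv g) x := by
  simpa only [iteratedDeriv_succ, iteratedDeriv_zero] using iteratedDeriv_sub hf hg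

theorem deriv_deriv_const_mul_sinh_mul_sub (c ω R x : ℝ) :
    deriv (deriv fun y => c * Real.sinh (ω * (R - y))) x =
      ω ^ 2 * (c * Real.sinh (ω * (R - x))) := by
  have hinner (y : ℝ) : HasDerivAt (fun z => ω * (R - z)) (-ω) y := by
    simpa using ((hasDerivAt_id y).const_sub R).const_mul ω
  have h1 : deriv (fun y => c * Real.sinh (ω * (R - y))) =
      fun y => c * (Real.cosh (ω * (R - y)) * -ω) := funext fun y =>
    (((Real.hasDerivAt_sinh _).comp y (hinner y)).const_mul c).deriv
  have h2 : HasDerivAt (fun y => c * (Real.cosh (ω * (R - y)) * -ω))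
      (c * (Real.sinh (ω * (R - x)) * -ω * -ω)) x :=
    (((Real.hasDerivAt_cosh _).comp x (hinner x)).mul_const (-ω)).const_mul c
  rw [h1, h2.deriv]
  ring

theorem outer_inhomogeneous_estimate_general
    (ω a R : ℝ) (hω : 0 < ω) (haR : a < R)
    (φ E : ℝ → ℝ) (hφ : ContDiffOn ℝ 2 φ (Set.Icc a R))
    (hode : ∀ x ∈ Set.Icc a R,
      -derivWithin (derivWithin φ (Set.Icc a R)) (Set.Icc a R) x + ω ^ 2 * φ x = E x)
    (hφR : φ R = 0) :
    ∀ x ∈ Set.Icc a R, ∀ M : ℝ, (∀ y ∈ Set.Icc a R, |E y| ≤ M) →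
      |φ x - φ a * Real.sinh (ω * (R - x)) / Real.sinh (ω * (R - a))| ≤ ω⁻¹ ^ 2 * M := by
  intro x hx M hM
  have hS : Real.sinh (ω * (R - a)) ≠ 0 :=
    (Real.sinh_pos_iff.mpr (mul_pos hω (sub_pos.mpr haR))).ne'
  set profile : ℝ → ℝ := fun y => φ a / Real.sinh (ω * (R - a)) * Real.sinh (ω * (R - y))
  have hprofile : ContDiff ℝ 2 profile := by fun_prop
  have hψ_ode : ∀ y ∈ Ioo a R,
      |ω ^ 2 * (φ - profile) y - deriv (deriv (φ - profile)) y| ≤ M := by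
    intro y hy
    have hnhds : Icc a R ∈ 𝓝 y := Icc_mem_nhds hy.1 hy.2
    rw [deriv_deriv_sub (hφ.contDiffAt hnhds) hprofile.contDiffAt,
      ← derivWithin_derivWithin_of_mem_nhds hnhds, deriv_deriv_const_mul_sinh_mul_sub]
    convert hM y (Ioo_subset_Icc_self hy) using 2
    rw [← hode y (Ioo_subset_Icc_self hy), Pi.sub_apply]
    ring
  have hM0 : 0 ≤ M := (abs_nonneg _).trans (hM a (left_mem_Icc.mpr haR.le))
  have hψ := abs_le_div_of_abs_mul_sub_deriv_deriv_le (pow_pos hω 2) hM0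
    (hφ.continuousOn.sub hprofile.continuous.continuousOn) hψ_ode
    (by simp [profile, div_mul_cancel₀ _ hS]) (by simp [profile, hφR]) x hx
  convert hψ using 2
  · simp only [Pi.sub_apply, profile]
    ring
  · rw [inv_pow, inv_mul_eq_div]

/-- **The outer inhomogeneous problem (cf. (3.12)).** If `−φ'' + ω² φ = E` on `[a, R]`
with `φ(R) = 0`, then `φ` deviates from the homogeneous profile
`φ(a) sinh(ω(R−x))/sinh(ω(R−a))` by at most `ω⁻² sup |E|`. -/
theorem outer_inhomogeneous_estimate
    (ω a R : ℝ) (hω : 0 < ω) (haR : a < R)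
    (φ E : ℝ → ℝ) (hφ : ContDiffOn ℝ 2 φ (Set.Icc a R))
    (hE : ContinuousOn E (Set.Icc a R))
    (hode : ∀ x ∈ Set.Icc a R,
      -derivWithin (derivWithin φ (Set.Icc a R)) (Set.Icc a R) x + ω ^ 2 * φ x = E x)
    (hφR : φ R = 0) :
    ∀ x ∈ Set.Icc a R, ∀ M : ℝ, (∀ y ∈ Set.Icc a R, |E y| ≤ M) →
      |φ x - φ a * Real.sinh (ω * (R - x)) / Real.sinh (ω * (R - a))| ≤ ω⁻¹ ^ 2 * M :=
  outer_inhomogeneous_estimate_general ω a R hω haR φ E hφ hode hφR
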